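/- Let w₀, w₁, …, w_m be a chain on the sphere S_r, i.e., consecutive points are distinct and non-antipodal and are joined by minimal geodesic arcs, with total length L = Σᵢ d_r(wᵢ₋₁, wᵢ) satisfying L < πr. If the angle at some interior vertex wᵢ (the angle between the arcs wᵢ₋₁wᵢ and wᵢwᵢ₊₁) is strictly less than π, then the endpoints are strictly closer than the total length: d_r(w₀, w_m) < L. -/

import Mathlib

noncomputable section

/-- Points of ℝ³. -/
abbrev E3 := EuclideanSpace ℝ (Fin 3)

/-- Points of the Euclidean plane. -/
abbrev E2 := EuclideanSpace ℝ (Fin 2)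

/-- `p` lies on the sphere `S_r` of radius `r` centered at the origin in ℝ³. -/
def onSphere (r : ℝ) (p : E3) : Prop := ‖p‖ = r

/-- Geodesic (great-circle) distance on the sphere of radius `r`:
`d_r(p,q) = r · arccos(⟪p,q⟫ / r²)`. -/
def sdist (r : ℝ) (p q : E3) : ℝ := r * Real.arccos ((inner ℝ p q : ℝ) / r ^ 2)

/-- The tangent vector at `p` pointing along the minimal geodesic arc from `p`
towards `q` (the component of `q` orthogonal to `p`). -/
def sTangent (p q : E3) : E3 := q - (((inner ℝ q p : ℝ)) / ‖p‖ ^ 2) • p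

/-- The spherical angle at vertex `v` between the minimal geodesic arcs `vp` and `vq`,
i.e. the angle between the tangent directions of the two arcs at `v`; it lies in `[0, π]`. -/
def sAngle (p v q : E3) : ℝ :=
  InnerProductGeometry.angle (sTangent v p) (sTangent v q)

/-- A geodesic triangle on the sphere of radius `r`: three vertices on the sphere,
pairwise neither equal nor antipodal, and not all lying on one great circle
(equivalently, linearly independent in ℝ³). -/
def SphTriangle (r : ℝ) (a b c : E3) : Prop :=
  onSphere r a ∧ onSphere r b ∧ onSphere r c ∧
  a ≠ b ∧ a ≠ c ∧ b ≠ c ∧ a ≠ -b ∧ a ≠ -c ∧ b ≠ -c ∧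
  LinearIndependent ℝ ![a, b, c]

/-!
On `S_r` the geodesic distance is `r` times the angle between position vectors, so the chain
estimate reduces to the triangle inequality for angles, and strictness to its equality case:
equality forces the neighbours of the middle vertex `b` to be antipodal, or `b` into the cone
they span. Since `sTangent b` is the orthogonal projection onto `bᗮ`, either way the two tangent
vectors at `b` are negatively proportional, i.e. the spherical angle at `b` is `π`.
-/

open Real InnerProductGeometry Finset

theorem InnerProductGeometry.angle_eq_pi_of_smul_add_smul_eq_zero {V : Type*}
    [NormedAddCommGroup V] [InnerProductSpace ℝ V] {x y : V} {s t : ℝ} (hx : x ≠ 0)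
    (hy : y ≠ 0) (hs : 0 ≤ s) (ht : 0 ≤ t) (hst : s ≠ 0 ∨ t ≠ 0) (h : s • x + t • y = 0) :
    angle x y = π := by
  have hs₀ : s ≠ 0 := by rintro rfl; simp_all
  have ht₀ : t ≠ 0 := by rintro rfl; simp_all
  refine angle_eq_pi_iff.2 ⟨hx, -s / t,
    div_neg_of_neg_of_pos (neg_neg_of_pos (hs.lt_of_ne' hs₀)) (ht.lt_of_ne' ht₀), ?_⟩
  rw [div_eq_inv_mul, mul_smul, neg_smul, neg_eq_of_add_eq_zero_right h, inv_smul_smul₀ ht₀]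

theorem notMem_span_singleton_of_norm_eq {V : Type*} [NormedAddCommGroup V]
    [InnerProductSpace ℝ V] {x y : V} (hnorm : ‖x‖ = ‖y‖) (hne : x ≠ y) (hne' : x ≠ -y) :
    x ∉ ℝ ∙ y := by
  rintro hx
  obtain ⟨k, rfl⟩ := Submodule.mem_span_singleton.1 hx
  have hy : y ≠ 0 := by rintro rfl; simp at hne
  rw [norm_smul, Real.norm_eq_abs, mul_eq_right₀ (norm_ne_zero_iff.2 hy)] at hnorm
  rcases abs_eq_abs.1 (hnorm.trans abs_one.symm) with rfl | rfl <;> simp_all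

theorem sTangent_eq_starProjection (p q : E3) :
    sTangent p q = (ℝ ∙ p)ᗮ.starProjection q := by
  rw [Submodule.starProjection_orthogonal_val, Submodule.starProjection_singleton,
    real_inner_comm]
  rfl

theorem sTangent_eq_zero_iff {p q : E3} : sTangent p q = 0 ↔ q ∈ ℝ ∙ p := by
  rw [sTangent_eq_starProjection, Submodule.starProjection_apply_eq_zero_iff,
    Submodule.orthogonal_orthogonal]

theorem sAngle_eq_pi_of_smul_add_smul_mem_span {a b c : E3} (ha : a ∉ ℝ ∙ b)
    (hc : c ∉ ℝ ∙ b) {s t : ℝ} (hs : 0 ≤ s) (ht : 0 ≤ t) (hst : s ≠ 0 ∨ t ≠ 0)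
    (h : s • a + t • c ∈ ℝ ∙ b) : sAngle a b c = π := by
  rw [← sTangent_eq_zero_iff] at ha hc h
  rw [sTangent_eq_starProjection, map_add, map_smul, map_smul,
    ← sTangent_eq_starProjection, ← sTangent_eq_starProjection] at h
  exact angle_eq_pi_of_smul_add_smul_eq_zero ha hc hs ht hst h

theorem angle_lt_angle_add_angle_of_sAngle_lt_pi {a b c : E3} (hb : b ≠ 0) (ha : a ∉ ℝ ∙ b)
    (hc : c ∉ ℝ ∙ b) (h : sAngle a b c < π) : angle a c < angle a b + angle b c := by
  refine (angle_le_angle_add_angle a b c).lt_of_ne fun heq => h.ne ?_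
  rcases (angle_eq_angle_add_angle_iff hb).1 heq with hπ | hmem
  · obtain ⟨-, k, hk, rfl⟩ := angle_eq_pi_iff.1 hπ
    refine sAngle_eq_pi_of_smul_add_smul_mem_span ha hc (neg_nonneg.2 hk.le) zero_le_one
      (Or.inr one_ne_zero) ?_
    simp
  · obtain ⟨s, t, hst⟩ := Submodule.mem_span_pair.1 hmem
    simp only [NNReal.smul_def] at hst
    refine sAngle_eq_pi_of_smul_add_smul_mem_span ha hc s.coe_nonneg t.coe_nonneg ?_
      (by rw [hst]; exact Submodule.mem_span_singleton_self b)
    by_contra! h0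
    simp_all

theorem sdist_eq_mul_angle {r : ℝ} {p q : E3} (hp : onSphere r p) (hq : onSphere r q) :
    sdist r p q = r * angle p q := by
  rw [sdist, angle, hp, hq, sq]

theorem sdist_self {r : ℝ} {p : E3} (hp : onSphere r p) : sdist r p p = 0 := by
  rw [sdist_eq_mul_angle hp hp]
  rcases eq_or_ne p 0 with rfl | hp₀
  · rw [← show ‖(0 : E3)‖ = r from hp, norm_zero, zero_mul]
  · rw [angle_self hp₀, mul_zero]

theorem sdist_le_sdist_add_sdist {r : ℝ} (hr : 0 ≤ r) {a b c : E3} (ha : onSphere r a)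
    (hb : onSphere r b) (hc : onSphere r c) : sdist r a c ≤ sdist r a b + sdist r b c := by
  rw [sdist_eq_mul_angle ha hc, sdist_eq_mul_angle ha hb, sdist_eq_mul_angle hb hc, ← mul_add]
  exact mul_le_mul_of_nonneg_left (angle_le_angle_add_angle a b c) hr

theorem sdist_lt_sdist_add_sdist_of_sAngle_lt_pi {r : ℝ} (hr : 0 < r) {a b c : E3}
    (ha : onSphere r a) (hb : onSphere r b) (hc : onSphere r c) (hab : a ≠ b) (hab' : a ≠ -b)
    (hbc : b ≠ c) (hbc' : b ≠ -c) (h : sAngle a b c < π) :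
    sdist r a c < sdist r a b + sdist r b c := by
  have hb₀ : b ≠ 0 := norm_pos_iff.1 (hb.symm ▸ hr)
  have ha' : a ∉ ℝ ∙ b := notMem_span_singleton_of_norm_eq (ha.trans hb.symm) hab hab'
  have hc' : c ∉ ℝ ∙ b :=
    notMem_span_singleton_of_norm_eq (hc.trans hb.symm) hbc.symm (by rintro rfl; simp at hbc')
  rw [sdist_eq_mul_angle ha hc, sdist_eq_mul_angle ha hb, sdist_eq_mul_angle hb hc, ← mul_add]
  exact mul_lt_mul_of_pos_left (angle_lt_angle_add_angle_of_sAngle_lt_pi hb₀ ha' hc' h) hr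

section Chain

variable {α : Type*} {S : Set α} {d : α → α → ℝ} {f : ℕ → α}

theorem le_sum_Ico_of_triangle (hself : ∀ x ∈ S, d x x = 0)
    (htri : ∀ x ∈ S, ∀ y ∈ S, ∀ z ∈ S, d x z ≤ d x y + d y z) {m n : ℕ} (hmn : m ≤ n)
    (hf : ∀ i, m ≤ i → i ≤ n → f i ∈ S) :
    d (f m) (f n) ≤ ∑ i ∈ Ico m n, d (f i) (f (i + 1)) := by
  induction n, hmn using Nat.le_induction with
  | base => simp [hself _ (hf m le_rfl le_rfl)]
  | succ n hmn ih =>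
    have hn := ih fun i hm hn => hf i hm (by omega)
    have hstep := htri _ (hf m le_rfl (by omega)) _ (hf n hmn (by omega)) _
      (hf (n + 1) (by omega) le_rfl)
    rw [sum_Ico_succ_top hmn]
    linarith

theorem lt_sum_Ico_of_triangle (hself : ∀ x ∈ S, d x x = 0)
    (htri : ∀ x ∈ S, ∀ y ∈ S, ∀ z ∈ S, d x z ≤ d x y + d y z) {m j n : ℕ} (hmj : m ≤ j)
    (hjn : j + 2 ≤ n) (hf : ∀ i, m ≤ i → i ≤ n → f i ∈ S)
    (hstrict : d (f j) (f (j + 2)) < d (f j) (f (j + 1)) + d (f (j + 1)) (f (j + 2))) :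
    d (f m) (f n) < ∑ i ∈ Ico m n, d (f i) (f (i + 1)) := by
  have hinit := le_sum_Ico_of_triangle hself htri hmj fun i hm hj => hf i hm (by omega)
  have htail := le_sum_Ico_of_triangle hself htri hjn fun i hj hn => hf i (by omega) hn
  have h₁ := htri _ (hf m le_rfl (by omega)) _ (hf j hmj (by omega)) _ (hf n (by omega) le_rfl)
  have h₂ := htri _ (hf j hmj (by omega)) _ (hf (j + 2) (by omega) hjn) _
    (hf n (by omega) le_rfl)
  rw [← sum_Ico_consecutive _ hmj (by omega : j ≤ n),
    ← sum_Ico_consecutive _ (by omega : j ≤ j + 2) hjn, sum_Ico_succ_top (by omega),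
    Nat.Ico_succ_singleton, sum_singleton]
  linarith

end Chain

open Real in
theorem spherical_chain_strict_shortcut_general (r : ℝ) (hr : 0 < r) (m : ℕ) (w : ℕ → E3)
    (hsph : ∀ i ≤ m, onSphere r (w i))
    (hne : ∀ i < m, w i ≠ w (i + 1) ∧ w i ≠ -(w (i + 1)))
    (hangle : ∃ i, 0 < i ∧ i < m ∧ sAngle (w (i - 1)) (w i) (w (i + 1)) < π) :
    sdist r (w 0) (w m) < ∑ i ∈ Finset.range m, sdist r (w i) (w (i + 1)) := by
  obtain ⟨i, hi₀, him, hang⟩ := hangle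
  obtain ⟨j, rfl⟩ : ∃ j, i = j + 1 := ⟨i - 1, by omega⟩
  rw [Nat.add_sub_cancel] at hang
  rw [range_eq_Ico]
  refine lt_sum_Ico_of_triangle (S := {p | onSphere r p}) (fun p hp => sdist_self hp)
    (fun a ha b hb c hc => sdist_le_sdist_add_sdist hr.le ha hb hc) j.zero_le him
    (fun k _ hk => hsph k hk) ?_
  exact sdist_lt_sdist_add_sdist_of_sAngle_lt_pi hr (hsph j (by omega))
    (hsph (j + 1) him.le) (hsph (j + 2) him) (hne j (by omega)).1 (hne j (by omega)).2
    (hne (j + 1) him).1 (hne (j + 1) him).2 hang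

open Real in
/-- **Strict shortcut for non-straight spherical chains** (used in the proof of
Lemma 6).  Let `w 0, …, w m` be a chain on the sphere `S_r` (consecutive points distinct
and non-antipodal, joined by minimal geodesic arcs) whose total length
`L = Σᵢ d_r(w (i-1), w i)` satisfies `L < π r`.  If the angle at some interior vertex is
strictly less than `π`, then `d_r(w 0, w m) < L`. -/
theorem spherical_chain_strict_shortcut (r : ℝ) (hr : 0 < r) (m : ℕ) (w : ℕ → E3)
    (hsph : ∀ i ≤ m, onSphere r (w i))
    (hne : ∀ i < m, w i ≠ w (i + 1) ∧ w i ≠ -(w (i + 1)))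
    (hL : ∑ i ∈ Finset.range m, sdist r (w i) (w (i + 1)) < π * r)
    (hangle : ∃ i, 0 < i ∧ i < m ∧ sAngle (w (i - 1)) (w i) (w (i + 1)) < π) :
    sdist r (w 0) (w m) < ∑ i ∈ Finset.range m, sdist r (w i) (w (i + 1)) :=
  spherical_chain_strict_shortcut_general r hr m w hsph hne hangle
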